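/- arXiv:2207.00087 — 4 statements merged into one kernel-verified Lean document; each statement's English description precedes it below -/
import Mathlib

section
/- The measure μ^△(dx dx₀ dx₁) = μ(dx) P(x, dx₀, dx₁) is invariant for the kernel Q^△, i.e. for all bounded measurable f on S³, ∫ (Q^△ f) dμ^△ = ∫ f dμ^△. -/
open MeasureTheory ProbabilityTheory Filter

/-- For `f : S³ → ℝ`, `(Pf)(x) = ∫ f(x,y,z) P(x,dy,dz)`. -/
noncomputable def kerP3 {S : Type*} [MeasurableSpace S]
    (P : ProbabilityTheory.Kernel S (S × S)) (f : S × S × S → ℝ) : S → ℝ :=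
  fun x => ∫ yz, f (x, yz.1, yz.2) ∂(P x)

/-- For `h : S² → ℝ`, `(Ph)(x) = ∫ h(y,z) P(x,dy,dz)`. -/
noncomputable def kerP2 {S : Type*} [MeasurableSpace S]
    (P : ProbabilityTheory.Kernel S (S × S)) (h : S × S → ℝ) : S → ℝ :=
  fun x => ∫ yz, h yz ∂(P x)

/-- First marginal `P₀`. -/
noncomputable def kerP0 {S : Type*} [MeasurableSpace S]
    (P : ProbabilityTheory.Kernel S (S × S)) (f : S → ℝ) : S → ℝ :=
  fun x => ∫ yz, f yz.1 ∂(P x)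

/-- Second marginal `P₁`. -/
noncomputable def kerP1 {S : Type*} [MeasurableSpace S]
    (P : ProbabilityTheory.Kernel S (S × S)) (f : S → ℝ) : S → ℝ :=
  fun x => ∫ yz, f yz.2 ∂(P x)

/-- `Q = (P₀ + P₁)/2`. -/
noncomputable def kerQ {S : Type*} [MeasurableSpace S]
    (P : ProbabilityTheory.Kernel S (S × S)) (f : S → ℝ) : S → ℝ :=
  fun x => (kerP0 P f x + kerP1 P f x) / 2

/-- The triangle kernel `Q^△` acting on functions on `S³`:
`(Q^△ f)(x,x₀,x₁) = (1/2)((P f)(x₀) + (P f)(x₁))`. -/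
noncomputable def kerQtri {S : Type*} [MeasurableSpace S]
    (P : ProbabilityTheory.Kernel S (S × S)) (f : S × S × S → ℝ) : S × S × S → ℝ :=
  fun p => (kerP3 P f p.2.1 + kerP3 P f p.2.2) / 2

/-- `⟨μ^△, f⟩ = ∫ ∫ f(x,x₀,x₁) P(x,dx₀,dx₁) μ(dx)` where `μ^△(dx dx₀ dx₁) = μ(dx)P(x,dx₀,dx₁)`. -/
noncomputable def muTri {S : Type*} [MeasurableSpace S] (μ : MeasureTheory.Measure S)
    (P : ProbabilityTheory.Kernel S (S × S)) (f : S × S × S → ℝ) : ℝ :=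
  ∫ x, kerP3 P f x ∂μ

/-- The measure `μ^△(dx dx₀ dx₁) = μ(dx)P(x,dx₀,dx₁)` is invariant for `Q^△`:
for all bounded measurable `f` on `S³`, `⟨μ^△, Q^△ f⟩ = ⟨μ^△, f⟩`, where `μ` is an
invariant probability measure for `Q = (P₀+P₁)/2`. -/
theorem muTri_invariant_kerQtri {S : Type*} [MeasurableSpace S]
    (P : Kernel S (S × S)) [IsMarkovKernel P]
    (μ : Measure S) [IsProbabilityMeasure μ]
    (hinv : ∀ h : S → ℝ, Measurable h → (∃ C, ∀ y, |h y| ≤ C) →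
      ∫ x, kerQ P h x ∂μ = ∫ x, h x ∂μ)
    (f : S × S × S → ℝ) (hfm : Measurable f) (hfb : ∃ C, ∀ p, |f p| ≤ C) :
    muTri μ P (kerQtri P f) = muTri μ P f := by

  obtain ⟨C, hC⟩ := hfb
  set g : S → ℝ := kerP3 P f with hg
  have hgm : Measurable g := by
    have : StronglyMeasurable (fun q : S × (S × S) => f (q.1, q.2.1, q.2.2)) := by
      exact (hfm.comp (by fun_prop)).stronglyMeasurable
    exact (this.integral_kernel_prod_right' (κ := P)).measurable
  have hgb : ∀ y, |g y| ≤ C := by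
    intro y
    rw [hg]
    calc |kerP3 P f y| ≤ ∫ yz, |f (y, yz.1, yz.2)| ∂(P y) := by
          simpa [Real.norm_eq_abs, kerP3] using
            norm_integral_le_integral_norm (μ := P y) (fun yz : S × S => f (y, yz.1, yz.2))
      _ ≤ ∫ _, C ∂(P y) := by
          refine integral_mono_of_nonneg (Filter.Eventually.of_forall fun _ => abs_nonneg _)
            (integrable_const C) (Filter.Eventually.of_forall fun yz => hC _)
      _ = C := by simp
  have hint : ∀ x, Integrable (fun yz : S × S => f (x, yz.1, yz.2)) (P x) := by
    intro x
    refine (integrable_const C).mono' ((hfm.comp (by fun_prop)).aestronglyMeasurable) ?_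
    exact Filter.Eventually.of_forall fun yz => by simpa using hC _
  have hint0 : ∀ x, Integrable (fun yz : S × S => g yz.1) (P x) := by
    intro x
    refine (integrable_const C).mono' ((hgm.comp measurable_fst).aestronglyMeasurable) ?_
    exact Filter.Eventually.of_forall fun yz => by simpa using hgb _
  have hint1 : ∀ x, Integrable (fun yz : S × S => g yz.2) (P x) := by
    intro x
    refine (integrable_const C).mono' ((hgm.comp measurable_snd).aestronglyMeasurable) ?_
    exact Filter.Eventually.of_forall fun yz => by simpa using hgb _
  have key : ∀ x, kerP3 P (kerQtri P f) x = kerQ P g x := by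
    intro x
    have h1 : kerP3 P (kerQtri P f) x = ∫ yz : S × S, (g yz.1 + g yz.2) / 2 ∂(P x) := rfl
    rw [h1, integral_div, integral_add (hint0 x) (hint1 x)]
    rfl
  have : muTri μ P (kerQtri P f) = ∫ x, kerQ P g x ∂μ := by
    unfold muTri
    exact integral_congr_ae (Filter.Eventually.of_forall key)
  rw [this, hinv g hgm ⟨C, hgb⟩]
  rfl
end

section
/- For all n ≥ 1 and bounded measurable f on S³, the n-th iterate of the triangle kernel satisfies (Q^△)^n f = (1/2)(Q^{n−1}(Pf) ⊕ Q^{n−1}(Pf)), where (g ⊕ h)(x, x₀, x₁) = g(x₀) + h(x₁). -/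
open MeasureTheory ProbabilityTheory Filter

section Aux
variable {S : Type*} [MeasurableSpace S] (P : Kernel S (S × S)) [IsMarkovKernel P]

lemma integrable_of_bdd {g : S × S → ℝ} (hm : Measurable g) {C : ℝ}
    (hb : ∀ p, |g p| ≤ C) (x : S) : Integrable g (P x) := by
  refine (integrable_const C).mono' hm.aestronglyMeasurable ?_
  filter_upwards with p using by simpa [Real.norm_eq_abs] using hb p

lemma abs_integral_le_bdd {g : S × S → ℝ} {C : ℝ}
    (hb : ∀ p, |g p| ≤ C) (x : S) : |∫ p, g p ∂(P x)| ≤ C := by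
  have := norm_integral_le_of_norm_le_const (μ := P x) (f := g) (C := C)
    (Filter.Eventually.of_forall (fun p => by simpa [Real.norm_eq_abs] using hb p))
  simpa [Real.norm_eq_abs] using this

lemma kerP3_meas {f : S × S × S → ℝ} (hfm : Measurable f) :
    Measurable (kerP3 P f) :=
  hfm.stronglyMeasurable.integral_kernel_prod_right'.measurable

lemma kerP3_bdd {f : S × S × S → ℝ} {C : ℝ} (hb : ∀ p, |f p| ≤ C) (x : S) :
    |kerP3 P f x| ≤ C :=
  abs_integral_le_bdd P (g := fun yz => f (x, yz.1, yz.2)) (fun p => hb _) x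

lemma kerQ_meas {g : S → ℝ} (hg : Measurable g) : Measurable (kerQ P g) := by
  have h0 : Measurable (kerP0 P g) := by
    have : StronglyMeasurable (fun p : S × (S × S) => g p.2.1) :=
      (hg.comp (measurable_fst.comp measurable_snd)).stronglyMeasurable
    exact this.integral_kernel_prod_right'.measurable
  have h1 : Measurable (kerP1 P g) := by
    have : StronglyMeasurable (fun p : S × (S × S) => g p.2.2) :=
      (hg.comp (measurable_snd.comp measurable_snd)).stronglyMeasurable
    exact this.integral_kernel_prod_right'.measurable
  exact (h0.add h1).div_const 2

lemma kerQ_bdd {g : S → ℝ} {C : ℝ} (hb : ∀ x, |g x| ≤ C) (x : S) :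
    |kerQ P g x| ≤ C := by
  have h0 : |kerP0 P g x| ≤ C :=
    abs_integral_le_bdd P (g := fun yz : S × S => g yz.1) (fun p => hb _) x
  have h1 : |kerP1 P g x| ≤ C :=
    abs_integral_le_bdd P (g := fun yz : S × S => g yz.2) (fun p => hb _) x
  have : |kerP0 P g x + kerP1 P g x| ≤ C + C := (abs_add_le _ _).trans (by gcongr)
  calc |kerQ P g x| = |kerP0 P g x + kerP1 P g x| / 2 := by
        rw [kerQ, abs_div]; norm_num
    _ ≤ (C + C) / 2 := by gcongr
    _ = C := by ring

lemma kerQ_iter_meas {g : S → ℝ} (hg : Measurable g) (m : ℕ) :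
    Measurable ((kerQ P)^[m] g) := by
  induction m with
  | zero => exact hg
  | succ m ih => rw [Function.iterate_succ_apply']; exact kerQ_meas P ih

lemma kerQ_iter_bdd {g : S → ℝ} {C : ℝ} (hb : ∀ x, |g x| ≤ C) (m : ℕ) :
    ∀ x, |(kerQ P)^[m] g x| ≤ C := by
  induction m with
  | zero => exact hb
  | succ m ih =>
      intro x
      rw [Function.iterate_succ_apply']
      exact kerQ_bdd P ih x

lemma kerQtri_half {g : S → ℝ} (hg : Measurable g) {C : ℝ} (hb : ∀ x, |g x| ≤ C) :
    kerQtri P (fun p => (1 / 2) * (g p.2.1 + g p.2.2))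
      = fun p => (1 / 2) * (kerQ P g p.2.1 + kerQ P g p.2.2) := by
  have key : ∀ x, kerP3 P (fun p => (1 / 2) * (g p.2.1 + g p.2.2)) x = kerQ P g x := by
    intro x
    have i0 : Integrable (fun yz : S × S => g yz.1) (P x) :=
      integrable_of_bdd P (hg.comp measurable_fst) (fun p => hb p.1) x
    have i1 : Integrable (fun yz : S × S => g yz.2) (P x) :=
      integrable_of_bdd P (hg.comp measurable_snd) (fun p => hb p.2) x
    have : kerP3 P (fun p => (1 / 2) * (g p.2.1 + g p.2.2)) x
        = (1 / 2) * ((∫ yz, g yz.1 ∂(P x)) + ∫ yz, g yz.2 ∂(P x)) := by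
      rw [kerP3]
      rw [integral_const_mul, integral_add i0 i1]
    rw [this, kerQ, kerP0, kerP1]; ring
  funext p
  simp only [kerQtri, key]
  ring

theorem kerQtri_iterate_aux {f : S × S × S → ℝ} (hfm : Measurable f)
    {C : ℝ} (hfb : ∀ p, |f p| ≤ C) (m : ℕ) :
    (kerQtri P)^[m + 1] f
      = fun p : S × S × S =>
          (1 / 2) * ((kerQ P)^[m] (kerP3 P f) p.2.1
            + (kerQ P)^[m] (kerP3 P f) p.2.2) := by
  induction m with
  | zero =>
      funext p
      rw [Function.iterate_one]
      simp only [Function.iterate_zero, id, kerQtri]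
      ring
  | succ m ih =>
      rw [Function.iterate_succ_apply', ih,
        kerQtri_half P (kerQ_iter_meas P (kerP3_meas P hfm) m)
          (kerQ_iter_bdd P (kerP3_bdd P hfb) m)]
      funext p
      rw [Function.iterate_succ_apply' (kerQ P) m]

end Aux

/-- For all `n ≥ 1` and bounded measurable `f` on `S³`,
`(Q^△)^n f = (1/2)(Q^{n−1}(Pf) ⊕ Q^{n−1}(Pf))`, where `(g ⊕ h)(x,x₀,x₁) = g(x₀) + h(x₁)`. -/
theorem kerQtri_iterate {S : Type*} [MeasurableSpace S]
    (P : Kernel S (S × S)) [IsMarkovKernel P]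
    (f : S × S × S → ℝ) (hfm : Measurable f) (hfb : ∃ C, ∀ p, |f p| ≤ C)
    (n : ℕ) (hn : 1 ≤ n) :
    (kerQtri P)^[n] f
      = fun p : S × S × S =>
          (1 / 2) * ((kerQ P)^[n - 1] (kerP3 P f) p.2.1
            + (kerQ P)^[n - 1] (kerP3 P f) p.2.2) := by
  obtain ⟨C, hC⟩ := hfb
  obtain ⟨m, rfl⟩ : ∃ m, n = m + 1 := ⟨n - 1, by omega⟩
  simpa using kerQtri_iterate_aux P hfm hC m
end

section
/- Many-to-one formula for second moments: for f ∈ ℬ_b(S), x ∈ S, and n ≥ 0, E_x[(∑_{i∈G_n} f(X_i))²] = 2^n Q^n(f²)(x) + ∑_{k=0}^{n−1} 2^{n+k} Q^{n−k−1}(P(Q^k f ⊗ Q^k f))(x), where (g⊗g)(y,z) = g(y)g(z). -/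
open MeasureTheory ProbabilityTheory Filter

/-- A bifurcating Markov chain indexed by the binary tree `List Bool`, with kernel `P`,
started at `x` under the law `law x`, satisfying the branching Markov property. -/
structure BMC (S : Type*) [MeasurableSpace S] (Ω : Type*) [MeasurableSpace Ω] where
  P : ProbabilityTheory.Kernel S (S × S)
  markov : ProbabilityTheory.IsMarkovKernel P
  law : S → MeasureTheory.Measure Ω
  prob : ∀ x, MeasureTheory.IsProbabilityMeasure (law x)
  X : List Bool → Ω → S
  meas : ∀ u, Measurable (X u)
  init : ∀ x, MeasureTheory.Measure.map (X []) (law x) = MeasureTheory.Measure.dirac x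
  branching : ∀ (x : S) (n : ℕ) (g : (Fin n → Bool) → S × S × S → ℝ),
    (∀ v, Measurable (g v)) → (∀ v, ∃ C, ∀ p, |g v p| ≤ C) →
    ∀ (H : ({u : List Bool // u.length ≤ n} → S) → ℝ),
      Measurable H → (∃ C, ∀ y, |H y| ≤ C) →
      (∫ ω, H (fun j => X j.1 ω) * ∏ v : Fin n → Bool,
          g v (X (List.ofFn v) ω, X (List.ofFn v ++ [false]) ω, X (List.ofFn v ++ [true]) ω)
          ∂(law x))
      = ∫ ω, H (fun j => X j.1 ω) * ∏ v : Fin n → Bool,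
          (∫ yz, g v (X (List.ofFn v) ω, yz.1, yz.2) ∂(P (X (List.ofFn v) ω)))
          ∂(law x)

/-- The mother-daughters triangle `X_u^△ = (X_u, X_{u0}, X_{u1})`. -/
def BMC.tri {S : Type*} [MeasurableSpace S] {Ω : Type*} [MeasurableSpace Ω]
    (B : BMC S Ω) (u : List Bool) (ω : Ω) : S × S × S :=
  (B.X u ω, B.X (u ++ [false]) ω, B.X (u ++ [true]) ω)

section Helpers

variable {S : Type*} [MeasurableSpace S]

/-- Bounded measurable real functions. -/
def BddMeas {α : Type*} [MeasurableSpace α] (g : α → ℝ) : Prop :=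
  Measurable g ∧ ∃ C, 0 ≤ C ∧ ∀ y, |g y| ≤ C

lemma BddMeas.of {α : Type*} [MeasurableSpace α] {g : α → ℝ}
    (hm : Measurable g) (hb : ∃ C, ∀ y, |g y| ≤ C) : BddMeas g := by
  obtain ⟨C, hC⟩ := hb
  exact ⟨hm, |C|, abs_nonneg _, fun y => (hC y).trans (le_abs_self C)⟩

lemma integrable_of_bdd_s7 {α : Type*} [MeasurableSpace α] {μ : Measure α} [IsFiniteMeasure μ]
    {g : α → ℝ} (hm : AEStronglyMeasurable g μ) {C : ℝ} (hb : ∀ a, |g a| ≤ C) :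
    Integrable g μ :=
  ⟨hm, HasFiniteIntegral.of_bounded (C := C)
    (Filter.Eventually.of_forall (by simpa [Real.norm_eq_abs] using hb))⟩

variable {P : ProbabilityTheory.Kernel S (S × S)}

lemma measurable_kerP3 [IsSFiniteKernel P] {g : S × S × S → ℝ} (hg : Measurable g) :
    Measurable (_root_.kerP3 P g) := by
  have h : Measurable fun p : S × (S × S) => g (p.1, p.2.1, p.2.2) := hg.comp (by fun_prop)
  exact h.stronglyMeasurable.integral_kernel_prod_right'.measurable

lemma abs_kerP3_le [IsMarkovKernel P] {g : S × S × S → ℝ} {C : ℝ}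
    (hb : ∀ p, |g p| ≤ C) (x : S) : |_root_.kerP3 P g x| ≤ C := by
  have h := norm_integral_le_of_norm_le_const (μ := P x)
    (f := fun yz : S × S => g (x, yz.1, yz.2)) (C := C)
    (Filter.Eventually.of_forall fun yz => by simpa [Real.norm_eq_abs] using hb _)
  simpa [kerP3, Real.norm_eq_abs, measure_univ] using h

lemma BddMeas.kerP3 [IsMarkovKernel P] {g : S × S × S → ℝ} (hg : BddMeas g) :
    BddMeas (_root_.kerP3 P g) :=
  ⟨measurable_kerP3 hg.1, hg.2.choose, hg.2.choose_spec.1,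
    fun x => abs_kerP3_le hg.2.choose_spec.2 x⟩

lemma kerP0_eq_kerP3 (g : S → ℝ) : _root_.kerP0 P g = _root_.kerP3 P (fun p => g p.2.1) := rfl
lemma kerP1_eq_kerP3 (g : S → ℝ) : _root_.kerP1 P g = _root_.kerP3 P (fun p => g p.2.2) := rfl
lemma kerP2_eq_kerP3 (h : S × S → ℝ) : _root_.kerP2 P h = _root_.kerP3 P (fun p => h p.2) := rfl

lemma BddMeas.kerP0 [IsMarkovKernel P] {g : S → ℝ} (hg : BddMeas g) :
    BddMeas (_root_.kerP0 P g) := by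
  rw [kerP0_eq_kerP3]
  exact BddMeas.kerP3 ⟨hg.1.comp (by fun_prop), hg.2.choose, hg.2.choose_spec.1,
    fun p => hg.2.choose_spec.2 _⟩

lemma BddMeas.kerP1 [IsMarkovKernel P] {g : S → ℝ} (hg : BddMeas g) :
    BddMeas (_root_.kerP1 P g) := by
  rw [kerP1_eq_kerP3]
  exact BddMeas.kerP3 ⟨hg.1.comp (by fun_prop), hg.2.choose, hg.2.choose_spec.1,
    fun p => hg.2.choose_spec.2 _⟩

lemma BddMeas.kerP2 [IsMarkovKernel P] {h : S × S → ℝ} (hh : BddMeas h) :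
    BddMeas (_root_.kerP2 P h) := by
  rw [kerP2_eq_kerP3]
  exact BddMeas.kerP3 ⟨hh.1.comp (by fun_prop), hh.2.choose, hh.2.choose_spec.1,
    fun p => hh.2.choose_spec.2 _⟩

lemma BddMeas.kerQ [IsMarkovKernel P] {g : S → ℝ} (hg : BddMeas g) :
    BddMeas (_root_.kerQ P g) := by
  obtain ⟨m0, C0, hC0, hb0⟩ := hg.kerP0 (P := P)
  obtain ⟨m1, C1, hC1, hb1⟩ := hg.kerP1 (P := P)
  refine ⟨(m0.add m1).div_const 2, (C0 + C1) / 2, by positivity, fun y => ?_⟩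
  have h1 := (abs_add_le (_root_.kerP0 P g y) (_root_.kerP1 P g y)).trans (add_le_add (hb0 y) (hb1 y))
  simp only [_root_.kerQ, abs_div, abs_two]
  linarith

lemma BddMeas.kerQ_iter [IsMarkovKernel P] {g : S → ℝ} (hg : BddMeas g) (n : ℕ) :
    BddMeas ((_root_.kerQ P)^[n] g) := by
  induction n with
  | zero => exact hg
  | succ n ih => rw [Function.iterate_succ_apply']; exact ih.kerQ

lemma kerQ_const_mul (c : ℝ) (g : S → ℝ) :
    _root_.kerQ P (fun y => c * g y) = fun y => c * _root_.kerQ P g y := by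
  funext y
  simp only [kerQ, kerP0, kerP1, integral_const_mul]
  ring

lemma kerQ_iter_const_mul (n : ℕ) (c : ℝ) (g : S → ℝ) :
    (_root_.kerQ P)^[n] (fun y => c * g y) = fun y => c * (_root_.kerQ P)^[n] g y := by
  induction n with
  | zero => rfl
  | succ n ih => rw [Function.iterate_succ_apply', ih, Function.iterate_succ_apply',
      kerQ_const_mul]

lemma kerQ_add [IsMarkovKernel P] {a b : S → ℝ} (ha : BddMeas a) (hb : BddMeas b) :
    _root_.kerQ P (fun y => a y + b y) = fun y => _root_.kerQ P a y + _root_.kerQ P b y := by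
  obtain ⟨ma, Ca, _, hba⟩ := ha
  obtain ⟨mb, Cb, _, hbb⟩ := hb
  funext y
  have ia1 : Integrable (fun yz : S × S => a yz.1) (P y) :=
    integrable_of_bdd_s7 (ma.comp measurable_fst).aestronglyMeasurable (fun p => hba _)
  have ib1 : Integrable (fun yz : S × S => b yz.1) (P y) :=
    integrable_of_bdd_s7 (mb.comp measurable_fst).aestronglyMeasurable (fun p => hbb _)
  have ia2 : Integrable (fun yz : S × S => a yz.2) (P y) :=
    integrable_of_bdd_s7 (ma.comp measurable_snd).aestronglyMeasurable (fun p => hba _)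
  have ib2 : Integrable (fun yz : S × S => b yz.2) (P y) :=
    integrable_of_bdd_s7 (mb.comp measurable_snd).aestronglyMeasurable (fun p => hbb _)
  simp only [kerQ, kerP0, kerP1]
  rw [integral_add ia1 ib1, integral_add ia2 ib2]
  ring

lemma kerQ_iter_add [IsMarkovKernel P] {a b : S → ℝ} (ha : BddMeas a) (hb : BddMeas b)
    (n : ℕ) :
    (_root_.kerQ P)^[n] (fun y => a y + b y) = fun y => (_root_.kerQ P)^[n] a y + (_root_.kerQ P)^[n] b y := by
  induction n with
  | zero => rfl
  | succ n ih =>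
      rw [Function.iterate_succ_apply', ih, Function.iterate_succ_apply',
        Function.iterate_succ_apply' (_root_.kerQ P) n b,
        kerQ_add (ha.kerQ_iter n) (hb.kerQ_iter n)]

end Helpers

section BMCLemmas

variable {S : Type*} [MeasurableSpace S] {Ω : Type*} [MeasurableSpace Ω] (B : BMC S Ω)

lemma BMC.integrable' (x : S) {g : Ω → ℝ} (hm : Measurable g) {C : ℝ}
    (hb : ∀ ω, |g ω| ≤ C) : Integrable g (B.law x) := by
  haveI := B.prob x
  exact integrable_of_bdd_s7 hm.aestronglyMeasurable hb

lemma BMC.integral_root (x : S) {g : S → ℝ} (hg : Measurable g) :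
    ∫ ω, g (B.X [] ω) ∂B.law x = g x := by
  rw [← integral_map (B.meas []).aemeasurable hg.aestronglyMeasurable, B.init x,
    integral_dirac' _ _ hg.stronglyMeasurable]

lemma BMC.branch_prod (x : S) {n : ℕ} (g : (Fin n → Bool) → S × S × S → ℝ)
    (hm : ∀ v, Measurable (g v)) (hb : ∀ v, ∃ C, ∀ p, |g v p| ≤ C) :
    ∫ ω, ∏ v : Fin n → Bool, g v (B.tri (List.ofFn v) ω) ∂B.law x
      = ∫ ω, ∏ v : Fin n → Bool, kerP3 B.P (g v) (B.X (List.ofFn v) ω) ∂B.law x := by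
  have h := B.branching x n g hm hb (fun _ => 1) measurable_const ⟨1, fun y => by norm_num⟩
  simpa [BMC.tri, kerP3] using h

lemma kerP3_const [IsMarkovKernel (B.P)] (c : ℝ) (y : S) :
    kerP3 B.P (fun _ => c) y = c := by
  simp [kerP3]

lemma BMC.one_step (x : S) {n : ℕ} (w : Fin n → Bool) {h : S × S × S → ℝ}
    (hm : Measurable h) {C : ℝ} (hb : ∀ p, |h p| ≤ C) :
    ∫ ω, h (B.tri (List.ofFn w) ω) ∂B.law x
      = ∫ ω, kerP3 B.P h (B.X (List.ofFn w) ω) ∂B.law x := by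
  classical
  haveI := B.markov
  have key := B.branch_prod x (fun v => fun p => if v = w then h p else 1)
    (fun v => by by_cases hv : v = w <;> simp [hv, hm])
    (fun v => ⟨|C| + 1, fun p => by
      by_cases hv : v = w
      · simp only [hv, if_true]
        exact (hb p).trans ((le_abs_self C).trans (by linarith))
      · simp [hv]⟩)
  have e1 : ∀ ω, (∏ v : Fin n → Bool, if v = w then h (B.tri (List.ofFn v) ω) else 1)
      = h (B.tri (List.ofFn w) ω) := by
    intro ω
    rw [Finset.prod_ite_eq' Finset.univ w (fun v => h (B.tri (List.ofFn v) ω))]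
    simp
  have e2 : ∀ (v : Fin n → Bool) (y : S),
      kerP3 B.P (fun p => if v = w then h p else 1) y
        = if v = w then kerP3 B.P h y else 1 := by
    intro v y
    by_cases hv : v = w <;> simp [hv, kerP3]
  simp only [e2] at key
  have e3 : ∀ ω, (∏ v : Fin n → Bool,
      if v = w then kerP3 B.P h (B.X (List.ofFn v) ω) else 1)
      = kerP3 B.P h (B.X (List.ofFn w) ω) := by
    intro ω
    rw [Finset.prod_ite_eq' Finset.univ w (fun v => kerP3 B.P h (B.X (List.ofFn v) ω))]
    simp
  calc ∫ ω, h (B.tri (List.ofFn w) ω) ∂B.law x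
      = ∫ ω, ∏ v : Fin n → Bool, if v = w then h (B.tri (List.ofFn v) ω) else 1 ∂B.law x := by
        simp only [e1]
    _ = ∫ ω, ∏ v : Fin n → Bool,
          if v = w then kerP3 B.P h (B.X (List.ofFn v) ω) else 1 ∂B.law x := key
    _ = ∫ ω, kerP3 B.P h (B.X (List.ofFn w) ω) ∂B.law x := by simp only [e3]

lemma BMC.pair_step (x : S) {n : ℕ} {v w : Fin n → Bool} (hvw : v ≠ w)
    {h₁ h₂ : S × S × S → ℝ} (hm₁ : Measurable h₁) (hm₂ : Measurable h₂)
    {C₁ C₂ : ℝ} (hb₁ : ∀ p, |h₁ p| ≤ C₁) (hb₂ : ∀ p, |h₂ p| ≤ C₂) :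
    ∫ ω, h₁ (B.tri (List.ofFn v) ω) * h₂ (B.tri (List.ofFn w) ω) ∂B.law x
      = ∫ ω, kerP3 B.P h₁ (B.X (List.ofFn v) ω) * kerP3 B.P h₂ (B.X (List.ofFn w) ω)
          ∂B.law x := by
  classical
  haveI := B.markov
  have key := B.branch_prod x
    (fun u => fun p => (if u = v then h₁ p else 1) * (if u = w then h₂ p else 1))
    (fun u => by
      by_cases h1 : u = v <;> by_cases h2 : u = w <;> simp [h1, h2, hvw, Ne.symm hvw, hm₁, hm₂, hm₁.mul hm₂])
    (fun u => ⟨(|C₁| + 1) * (|C₂| + 1), fun p => by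
      rw [abs_mul]
      have b1 : |if u = v then h₁ p else 1| ≤ |C₁| + 1 := by
        by_cases h1 : u = v
        · simp only [h1, if_true]; exact (hb₁ p).trans ((le_abs_self C₁).trans (by linarith))
        · simp [h1]
      have b2 : |if u = w then h₂ p else 1| ≤ |C₂| + 1 := by
        by_cases h2 : u = w
        · simp only [h2, if_true]; exact (hb₂ p).trans ((le_abs_self C₂).trans (by linarith))
        · simp [h2]
      exact mul_le_mul b1 b2 (abs_nonneg _) (by positivity)⟩)
  have prodeq : ∀ (F G : (Fin n → Bool) → ℝ),
      (∏ u : Fin n → Bool, (if u = v then F u else 1) * (if u = w then G u else 1))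
        = F v * G w := by
    intro F G
    rw [Finset.prod_mul_distrib, Finset.prod_ite_eq' Finset.univ v F,
      Finset.prod_ite_eq' Finset.univ w G]
    simp
  have e2 : ∀ (u : Fin n → Bool) (y : S),
      kerP3 B.P (fun p => (if u = v then h₁ p else 1) * (if u = w then h₂ p else 1)) y
        = (if u = v then kerP3 B.P h₁ y else 1) * (if u = w then kerP3 B.P h₂ y else 1) := by
    intro u y
    by_cases h1 : u = v <;> by_cases h2 : u = w
    · exact absurd (h1.symm.trans h2) hvw
    · simp [h1, h2, hvw, Ne.symm hvw, kerP3]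
    · simp [h1, h2, hvw, Ne.symm hvw, kerP3]
    · simp [h1, h2, hvw, Ne.symm hvw, kerP3]
  simp only [e2] at key
  calc ∫ ω, h₁ (B.tri (List.ofFn v) ω) * h₂ (B.tri (List.ofFn w) ω) ∂B.law x
      = ∫ ω, ∏ u : Fin n → Bool,
          (if u = v then h₁ (B.tri (List.ofFn u) ω) else 1)
            * (if u = w then h₂ (B.tri (List.ofFn u) ω) else 1) ∂B.law x := by
        simp only [prodeq]
    _ = ∫ ω, ∏ u : Fin n → Bool,
          (if u = v then kerP3 B.P h₁ (B.X (List.ofFn u) ω) else 1)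
            * (if u = w then kerP3 B.P h₂ (B.X (List.ofFn u) ω) else 1) ∂B.law x := key
    _ = _ := by simp only [prodeq]

end BMCLemmas

section MoreHelpers

variable {S : Type*} [MeasurableSpace S] {Ω : Type*} [MeasurableSpace Ω]

lemma ofFn_snoc' {n : ℕ} (w : Fin n → Bool) (b : Bool) :
    List.ofFn (Fin.snoc w b) = List.ofFn w ++ [b] := by
  rw [List.ofFn_succ']
  simp [Fin.snoc_castSucc, List.concat_eq_append]

def snocEquiv (n : ℕ) : ((Fin n → Bool) × Bool) ≃ (Fin (n + 1) → Bool) where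
  toFun p := Fin.snoc p.1 p.2
  invFun v := (fun i => v i.castSucc, v (Fin.last n))
  left_inv := by
    rintro ⟨w, b⟩
    refine Prod.ext ?_ ?_
    · funext i; simp [Fin.snoc_castSucc]
    · simp [Fin.snoc_last]
  right_inv v := Fin.snoc_init_self v

lemma sum_level_succ {M : Type*} [AddCommMonoid M] (n : ℕ) (g : List Bool → M) :
    ∑ v : Fin (n + 1) → Bool, g (List.ofFn v)
      = ∑ w : Fin n → Bool, (g (List.ofFn w ++ [false]) + g (List.ofFn w ++ [true])) := by
  classical
  rw [← Fintype.sum_equiv (snocEquiv n) (fun p : (Fin n → Bool) × Bool => g (List.ofFn p.1 ++ [p.2]))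
      (fun v => g (List.ofFn v)) (fun p => by
        show g (List.ofFn p.1 ++ [p.2]) = g (List.ofFn (Fin.snoc p.1 p.2))
        exact (congrArg g (ofFn_snoc' p.1 p.2)).symm)]
  rw [Fintype.sum_prod_type]
  refine Finset.sum_congr rfl fun w _ => ?_
  simp [Fintype.sum_bool, add_comm]

variable {P : ProbabilityTheory.Kernel S (S × S)}

lemma kerP3_pair_add [IsMarkovKernel P] {g : S → ℝ} (hg : BddMeas g) :
    kerP3 P (fun p => g p.2.1 + g p.2.2) = fun y => 2 * kerQ P g y := by
  obtain ⟨mg, C, _, hb⟩ := hg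
  funext y
  have i1 : Integrable (fun yz : S × S => g yz.1) (P y) :=
    integrable_of_bdd_s7 (mg.comp measurable_fst).aestronglyMeasurable (fun p => hb _)
  have i2 : Integrable (fun yz : S × S => g yz.2) (P y) :=
    integrable_of_bdd_s7 (mg.comp measurable_snd).aestronglyMeasurable (fun p => hb _)
  show (∫ yz : S × S, (g yz.1 + g yz.2) ∂P y) = 2 * kerQ P g y
  rw [integral_add i1 i2]
  simp only [kerQ, kerP0, kerP1]
  ring

lemma kerP3_sq_add [IsMarkovKernel P] {f : S → ℝ} (hf : BddMeas f) :
    kerP3 P (fun p => (f p.2.1 + f p.2.2) ^ 2)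
      = fun y => 2 * kerQ P (fun z => f z ^ 2) y
          + 2 * kerP2 P (fun yz => f yz.1 * f yz.2) y := by
  obtain ⟨mf, C, hC, hb⟩ := hf
  funext y
  have i1 : Integrable (fun yz : S × S => f yz.1 ^ 2) (P y) :=
    integrable_of_bdd_s7 ((mf.comp measurable_fst).pow_const 2).aestronglyMeasurable
      (C := C ^ 2) (fun p => by
        rw [abs_pow]
        exact pow_le_pow_left₀ (abs_nonneg _) (hb _) 2)
  have i2 : Integrable (fun yz : S × S => f yz.2 ^ 2) (P y) :=
    integrable_of_bdd_s7 ((mf.comp measurable_snd).pow_const 2).aestronglyMeasurable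
      (C := C ^ 2) (fun p => by
        rw [abs_pow]
        exact pow_le_pow_left₀ (abs_nonneg _) (hb _) 2)
  have i3 : Integrable (fun yz : S × S => 2 * (f yz.1 * f yz.2)) (P y) :=
    integrable_of_bdd_s7 (((mf.comp measurable_fst).mul (mf.comp measurable_snd)).const_mul
      2).aestronglyMeasurable (C := 2 * (C * C)) (fun p => by
        rw [abs_mul, abs_mul, abs_two]
        have := mul_le_mul (hb p.1) (hb p.2) (abs_nonneg _) hC
        nlinarith [abs_nonneg (f p.1), abs_nonneg (f p.2)])
  show (∫ yz : S × S, (f yz.1 + f yz.2) ^ 2 ∂P y) = _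
  have : (fun yz : S × S => (f yz.1 + f yz.2) ^ 2)
      = fun yz => (f yz.1 ^ 2 + f yz.2 ^ 2) + 2 * (f yz.1 * f yz.2) := by
    funext yz; ring
  have i12 : Integrable (fun yz : S × S => f yz.1 ^ 2 + f yz.2 ^ 2) (P y) := by
    exact i1.add i2
  rw [this, integral_add i12 i3, integral_add i1 i2, integral_const_mul]
  simp only [kerQ, kerP0, kerP1, kerP2]
  ring

end MoreHelpers

section FirstMoment

variable {S : Type*} [MeasurableSpace S] {Ω : Type*} [MeasurableSpace Ω] (B : BMC S Ω)

lemma BMC.first_moment (x : S) : ∀ (n : ℕ) (g : S → ℝ), BddMeas g →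
    ∫ ω, ∑ v : Fin n → Bool, g (B.X (List.ofFn v) ω) ∂B.law x
      = 2 ^ n * (kerQ B.P)^[n] g x := by
  intro n
  induction n with
  | zero =>
      intro g hg
      have h1 : ∀ ω, (∑ v : Fin 0 → Bool, g (B.X (List.ofFn v) ω)) = g (B.X [] ω) := by
        intro ω
        simp [List.ofFn_zero]
      simp only [h1]
      rw [B.integral_root x hg.1]
      simp
  | succ n ih =>
      intro g hg
      haveI := B.markov
      haveI := B.prob x
      obtain ⟨mg, C, hC, hb⟩ := hg
      have hQg : BddMeas (kerQ B.P g) := BddMeas.kerQ ⟨mg, C, hC, hb⟩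
      have intg : ∀ u : List Bool, Integrable (fun ω => g (B.X u ω)) (B.law x) :=
        fun u => B.integrable' x (mg.comp (B.meas u)) (fun ω => hb _)
      have intQ : ∀ u : List Bool, Integrable (fun ω => kerQ B.P g (B.X u ω)) (B.law x) :=
        fun u => B.integrable' x (hQg.1.comp (B.meas u)) (fun ω => hQg.2.choose_spec.2 _)
      calc ∫ ω, ∑ v : Fin (n + 1) → Bool, g (B.X (List.ofFn v) ω) ∂B.law x
          = ∫ ω, ∑ w : Fin n → Bool,
              (g (B.X (List.ofFn w ++ [false]) ω) + g (B.X (List.ofFn w ++ [true]) ω))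
              ∂B.law x := by
            refine integral_congr_ae (Filter.Eventually.of_forall fun ω => ?_)
            exact sum_level_succ n (fun l => g (B.X l ω))
        _ = ∑ w : Fin n → Bool, ∫ ω,
              (g (B.X (List.ofFn w ++ [false]) ω) + g (B.X (List.ofFn w ++ [true]) ω))
              ∂B.law x := by
            exact integral_finset_sum _ (fun w _ => (intg _).add (intg _))
        _ = ∑ w : Fin n → Bool, ∫ ω,
              kerP3 B.P (fun p => g p.2.1 + g p.2.2) (B.X (List.ofFn w) ω) ∂B.law x := by
            refine Finset.sum_congr rfl fun w _ => ?_
            exact B.one_step x w ((mg.comp (measurable_fst.comp measurable_snd)).add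
              (mg.comp (measurable_snd.comp measurable_snd)))
              (C := C + C) (fun p => (abs_add_le _ _).trans (add_le_add (hb _) (hb _)))
        _ = ∑ w : Fin n → Bool, ∫ ω, 2 * kerQ B.P g (B.X (List.ofFn w) ω) ∂B.law x := by
            refine Finset.sum_congr rfl fun w _ => ?_
            rw [kerP3_pair_add ⟨mg, C, hC, hb⟩]
        _ = ∑ w : Fin n → Bool, 2 * ∫ ω, kerQ B.P g (B.X (List.ofFn w) ω) ∂B.law x := by
            refine Finset.sum_congr rfl fun w _ => ?_
            exact integral_const_mul 2 _
        _ = 2 * ∫ ω, ∑ w : Fin n → Bool, kerQ B.P g (B.X (List.ofFn w) ω) ∂B.law x := by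
            rw [← Finset.mul_sum, integral_finset_sum _ (fun w _ => intQ _)]
        _ = 2 * (2 ^ n * (kerQ B.P)^[n] (kerQ B.P g) x) := by
            rw [ih (kerQ B.P g) hQg]
        _ = 2 ^ (n + 1) * (kerQ B.P)^[n + 1] g x := by
            rw [Function.iterate_succ_apply]
            ring

end FirstMoment

section Closure

variable {α : Type*} [MeasurableSpace α]

lemma BddMeas.add' {a b : α → ℝ} (ha : BddMeas a) (hb : BddMeas b) :
    BddMeas (fun y => a y + b y) := by
  obtain ⟨ma, Ca, hCa, hba⟩ := ha
  obtain ⟨mb, Cb, hCb, hbb⟩ := hb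
  exact ⟨ma.add mb, Ca + Cb, by linarith, fun y =>
    (abs_add_le _ _).trans (add_le_add (hba y) (hbb y))⟩

lemma BddMeas.const_mul' {a : α → ℝ} (ha : BddMeas a) (c : ℝ) :
    BddMeas (fun y => c * a y) := by
  obtain ⟨ma, Ca, hCa, hba⟩ := ha
  exact ⟨ma.const_mul c, |c| * Ca, by positivity, fun y => by
    rw [abs_mul]
    exact mul_le_mul_of_nonneg_left (hba y) (abs_nonneg c)⟩

lemma BddMeas.sq' {a : α → ℝ} (ha : BddMeas a) : BddMeas (fun y => a y ^ 2) := by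
  obtain ⟨ma, Ca, hCa, hba⟩ := ha
  exact ⟨ma.pow_const 2, Ca ^ 2, by positivity, fun y => by
    rw [abs_pow]
    exact pow_le_pow_left₀ (abs_nonneg _) (hba y) 2⟩

end Closure



/-- Many-to-one formula for second moments:
`E_x[M_{G_n}(f)²] = 2^n Q^n(f²)(x) + ∑_{k=0}^{n−1} 2^{n+k} Q^{n−k−1}(P(Q^k f ⊗ Q^k f))(x)`. -/
theorem many_to_one_second_moment {S : Type*} [MeasurableSpace S]
    {Ω : Type*} [MeasurableSpace Ω] (B : BMC S Ω)
    (f : S → ℝ) (hfm : Measurable f) (hfb : ∃ C, ∀ y, |f y| ≤ C) (x : S) (n : ℕ) :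
    ∫ ω, (∑ v : Fin n → Bool, f (B.X (List.ofFn v) ω)) ^ 2 ∂(B.law x)
      = 2 ^ n * (kerQ B.P)^[n] (fun y => (f y) ^ 2) x
        + ∑ k ∈ Finset.range n, (2 : ℝ) ^ (n + k) *
            (kerQ B.P)^[n - k - 1]
              (kerP2 B.P (fun yz => (kerQ B.P)^[k] f yz.1 * (kerQ B.P)^[k] f yz.2)) x := by
  classical
  haveI := B.markov
  haveI := B.prob x
  induction n generalizing f hfm hfb with
  | zero =>
      have h1 : ∀ ω, (∑ v : Fin 0 → Bool, f (B.X (List.ofFn v) ω)) = f (B.X [] ω) := by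
        intro ω; simp [List.ofFn_zero]
      simp only [h1]
      have h2 := B.integral_root x (g := fun y => f y ^ 2) (hfm.pow_const 2)
      simpa using h2
  | succ n ih =>
      obtain ⟨C, hC0, hb⟩ : ∃ C, 0 ≤ C ∧ ∀ y, |f y| ≤ C := by
        obtain ⟨C, hC⟩ := hfb
        exact ⟨|C|, abs_nonneg _, fun y => (hC y).trans (le_abs_self C)⟩
      have hfB : BddMeas f := ⟨hfm, C, hC0, hb⟩
      have hQf : BddMeas (kerQ B.P f) := hfB.kerQ
      obtain ⟨CQ, hCQ0, hbQ⟩ := hQf.2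
      -- triangle-level functions
      have mh2 : Measurable (fun p : S × S × S => f p.2.1 + f p.2.2) :=
        (hfm.comp (measurable_fst.comp measurable_snd)).add
          (hfm.comp (measurable_snd.comp measurable_snd))
      have bh2 : ∀ p : S × S × S, |f p.2.1 + f p.2.2| ≤ C + C :=
        fun p => (abs_add_le _ _).trans (add_le_add (hb _) (hb _))
      have mhh : Measurable (fun p : S × S × S => (f p.2.1 + f p.2.2) ^ 2) :=
        mh2.pow_const 2
      have bhh : ∀ p : S × S × S, |(f p.2.1 + f p.2.2) ^ 2| ≤ (C + C) ^ 2 := fun p => by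
        rw [abs_pow]
        exact pow_le_pow_left₀ (abs_nonneg _) (bh2 p) 2
      set q : S → ℝ := kerP3 B.P (fun p => f p.2.1 + f p.2.2) with hqdef
      have hqB : BddMeas q := BddMeas.kerP3 ⟨mh2, C + C, by linarith, bh2⟩
      obtain ⟨mq, Cq, hCq0, hbq⟩ := hqB
      have hq_eq : q = fun y => 2 * kerQ B.P f y := kerP3_pair_add hfB
      set h' : S → ℝ := kerP3 B.P (fun p => (f p.2.1 + f p.2.2) ^ 2) with hh'def
      have hh'B : BddMeas h' := BddMeas.kerP3 ⟨mhh, (C + C) ^ 2, by positivity, bhh⟩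
      obtain ⟨mh', Ch', hCh'0, hbh'⟩ := hh'B
      have hh'_eq : h' = fun y => 2 * kerQ B.P (fun z => f z ^ 2) y
          + 2 * kerP2 B.P (fun yz => f yz.1 * f yz.2) y := kerP3_sq_add hfB
      set r : S → ℝ := fun y => h' y - q y ^ 2 with hrdef
      have hrB : BddMeas r :=
        ⟨mh'.sub (mq.pow_const 2), Ch' + Cq ^ 2, by positivity, fun y => by
          have h1 : |q y ^ 2| ≤ Cq ^ 2 := by
            rw [abs_pow]; exact pow_le_pow_left₀ (abs_nonneg _) (hbq y) 2
          calc |h' y - q y ^ 2| ≤ |h' y| + |q y ^ 2| := abs_sub _ _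
            _ ≤ Ch' + Cq ^ 2 := add_le_add (hbh' y) h1⟩
      -- integrability helpers
      have intqq : ∀ u u' : List Bool,
          Integrable (fun ω => q (B.X u ω) * q (B.X u' ω)) (B.law x) := fun u u' =>
        B.integrable' x ((mq.comp (B.meas u)).mul (mq.comp (B.meas u')))
          (C := Cq * Cq) (fun ω => by
            rw [abs_mul]
            exact mul_le_mul (hbq _) (hbq _) (abs_nonneg _) hCq0)
      have intr : ∀ u : List Bool, Integrable (fun ω => r (B.X u ω)) (B.law x) := fun u =>
        B.integrable' x (hrB.1.comp (B.meas u)) (fun ω => hrB.2.choose_spec.2 _)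
      have mtriq : ∀ u : List Bool,
          Measurable (fun ω => f (B.X (u ++ [false]) ω) + f (B.X (u ++ [true]) ω)) :=
        fun u => (hfm.comp (B.meas _)).add (hfm.comp (B.meas _))
      have inth2 : ∀ u u' : List Bool,
          Integrable (fun ω =>
            (f (B.X (u ++ [false]) ω) + f (B.X (u ++ [true]) ω)) *
              (f (B.X (u' ++ [false]) ω) + f (B.X (u' ++ [true]) ω))) (B.law x) :=
        fun u u' => B.integrable' x ((mtriq u).mul (mtriq u'))
          (C := (C + C) * (C + C)) (fun ω => by
            rw [abs_mul]
            exact mul_le_mul (bh2 (B.tri u ω)) (bh2 (B.tri u' ω)) (abs_nonneg _)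
              (by linarith))
      -- auxiliary identities used to assemble the sums
      have hqq : ∫ ω, (∑ v : Fin n → Bool, q (B.X (List.ofFn v) ω)) ^ 2 ∂B.law x
          = ∑ v : Fin n → Bool, ∑ w : Fin n → Bool,
              ∫ ω, q (B.X (List.ofFn v) ω) * q (B.X (List.ofFn w) ω) ∂B.law x := by
        calc ∫ ω, (∑ v : Fin n → Bool, q (B.X (List.ofFn v) ω)) ^ 2 ∂B.law x
            = ∫ ω, ∑ v : Fin n → Bool, ∑ w : Fin n → Bool,
                q (B.X (List.ofFn v) ω) * q (B.X (List.ofFn w) ω) ∂B.law x := by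
              refine integral_congr_ae (Filter.Eventually.of_forall fun ω => ?_)
              dsimp only
              rw [pow_two, Finset.sum_mul_sum]
          _ = ∑ v : Fin n → Bool, ∑ w : Fin n → Bool,
                ∫ ω, q (B.X (List.ofFn v) ω) * q (B.X (List.ofFn w) ω) ∂B.law x := by
              rw [integral_finset_sum _ (fun v _ =>
                integrable_finset_sum _ (fun w _ => intqq _ _))]
              exact Finset.sum_congr rfl fun v _ =>
                integral_finset_sum _ (fun w _ => intqq _ _)
      have hrr : ∫ ω, ∑ v : Fin n → Bool, r (B.X (List.ofFn v) ω) ∂B.law x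
          = ∑ v : Fin n → Bool, ∫ ω, r (B.X (List.ofFn v) ω) ∂B.law x :=
        integral_finset_sum _ (fun v _ => intr _)
      -- the main chain
      calc ∫ ω, (∑ v : Fin (n + 1) → Bool, f (B.X (List.ofFn v) ω)) ^ 2 ∂B.law x
          = ∫ ω, ∑ v : Fin n → Bool, ∑ w : Fin n → Bool,
              (f (B.X (List.ofFn v ++ [false]) ω) + f (B.X (List.ofFn v ++ [true]) ω)) *
                (f (B.X (List.ofFn w ++ [false]) ω) + f (B.X (List.ofFn w ++ [true]) ω))
              ∂B.law x := by
            refine integral_congr_ae (Filter.Eventually.of_forall fun ω => ?_)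
            dsimp only
            rw [sum_level_succ n (fun l => f (B.X l ω)), pow_two, Finset.sum_mul_sum]
        _ = ∑ v : Fin n → Bool, ∑ w : Fin n → Bool, ∫ ω,
              (f (B.X (List.ofFn v ++ [false]) ω) + f (B.X (List.ofFn v ++ [true]) ω)) *
                (f (B.X (List.ofFn w ++ [false]) ω) + f (B.X (List.ofFn w ++ [true]) ω))
              ∂B.law x := by
            rw [integral_finset_sum _ (fun v _ =>
              integrable_finset_sum _ (fun w _ => inth2 _ _))]
            exact Finset.sum_congr rfl fun v _ =>
              integral_finset_sum _ (fun w _ => inth2 _ _)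
        _ = ∑ v : Fin n → Bool, ∑ w : Fin n → Bool,
              ((∫ ω, q (B.X (List.ofFn v) ω) * q (B.X (List.ofFn w) ω) ∂B.law x)
                + if v = w then ∫ ω, r (B.X (List.ofFn v) ω) ∂B.law x else 0) := by
            refine Finset.sum_congr rfl fun v _ => Finset.sum_congr rfl fun w _ => ?_
            by_cases hvw : v = w
            · subst hvw
              rw [if_pos rfl]
              have l1 : ∫ ω,
                  (f (B.X (List.ofFn v ++ [false]) ω) + f (B.X (List.ofFn v ++ [true]) ω)) *
                    (f (B.X (List.ofFn v ++ [false]) ω) + f (B.X (List.ofFn v ++ [true]) ω))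
                  ∂B.law x
                  = ∫ ω, (fun p : S × S × S => (f p.2.1 + f p.2.2) ^ 2)
                      (B.tri (List.ofFn v) ω) ∂B.law x := by
                refine integral_congr_ae (Filter.Eventually.of_forall fun ω => ?_)
                simp [BMC.tri, pow_two]
              rw [l1, B.one_step x v mhh bhh]
              rw [← integral_add (intqq _ _) (intr _)]
              refine integral_congr_ae (Filter.Eventually.of_forall fun ω => ?_)
              show h' (B.X (List.ofFn v) ω) = q (B.X (List.ofFn v) ω) * q (B.X (List.ofFn v) ω)
                + r (B.X (List.ofFn v) ω)
              rw [hrdef]; ring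
            · rw [if_neg hvw, add_zero]
              have hps := B.pair_step x hvw mh2 mh2 bh2 bh2
              simpa [BMC.tri] using hps
        _ = (∫ ω, (∑ v : Fin n → Bool, q (B.X (List.ofFn v) ω)) ^ 2 ∂B.law x)
              + ∫ ω, ∑ v : Fin n → Bool, r (B.X (List.ofFn v) ω) ∂B.law x := by
            rw [hqq, hrr]
            rw [Finset.sum_congr rfl (fun (v : Fin n → Bool) _ => Finset.sum_add_distrib),
              Finset.sum_add_distrib]
            congr 1
            refine Finset.sum_congr rfl fun v _ => ?_
            rw [Finset.sum_ite_eq]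
            simp
        _ = 4 * (∫ ω, (∑ v : Fin n → Bool, kerQ B.P f (B.X (List.ofFn v) ω)) ^ 2 ∂B.law x)
              + 2 ^ n * (kerQ B.P)^[n] r x := by
            congr 1
            · rw [← integral_const_mul]
              refine integral_congr_ae (Filter.Eventually.of_forall fun ω => ?_)
              dsimp only
              rw [hq_eq, ← Finset.mul_sum]
              ring
            · rw [B.first_moment x n r hrB]
        _ = 4 * (2 ^ n * (kerQ B.P)^[n] (fun y => kerQ B.P f y ^ 2) x
              + ∑ k ∈ Finset.range n, (2 : ℝ) ^ (n + k) *
                  (kerQ B.P)^[n - k - 1]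
                    (kerP2 B.P (fun yz => (kerQ B.P)^[k] (kerQ B.P f) yz.1 *
                      (kerQ B.P)^[k] (kerQ B.P f) yz.2)) x)
              + 2 ^ n * (kerQ B.P)^[n] r x := by
            rw [ih (kerQ B.P f) hQf.1 ⟨CQ, hbQ⟩]
        _ = 2 ^ (n + 1) * (kerQ B.P)^[n + 1] (fun y => f y ^ 2) x
              + ∑ k ∈ Finset.range (n + 1), (2 : ℝ) ^ (n + 1 + k) *
                  (kerQ B.P)^[n + 1 - k - 1]
                    (kerP2 B.P (fun yz => (kerQ B.P)^[k] f yz.1 *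
                      (kerQ B.P)^[k] f yz.2)) x := by
            -- kernel algebra
            have hf2 : BddMeas (fun y => f y ^ 2) := hfB.sq'
            have hff : BddMeas (fun yz : S × S => f yz.1 * f yz.2) :=
              ⟨(hfm.comp measurable_fst).mul (hfm.comp measurable_snd), C * C,
                by positivity, fun p => by
                  rw [abs_mul]
                  exact mul_le_mul (hb _) (hb _) (abs_nonneg _) hC0⟩
            have hA1 : BddMeas (fun y => 2 * kerQ B.P (fun z => f z ^ 2) y) :=
              (hf2.kerQ).const_mul' 2
            have hA2 : BddMeas (fun y => 2 * kerP2 B.P (fun yz : S × S => f yz.1 * f yz.2) y) :=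
              (hff.kerP2).const_mul' 2
            have hA3 : BddMeas (fun y => (-4 : ℝ) * kerQ B.P f y ^ 2) :=
              (hQf.sq').const_mul' (-4)
            have hr_split : r = fun y =>
                (2 * kerQ B.P (fun z => f z ^ 2) y
                  + 2 * kerP2 B.P (fun yz : S × S => f yz.1 * f yz.2) y)
                + (-4 : ℝ) * kerQ B.P f y ^ 2 := by
              funext y
              rw [hrdef]
              have e1 : h' y = 2 * kerQ B.P (fun z => f z ^ 2) y
                  + 2 * kerP2 B.P (fun yz : S × S => f yz.1 * f yz.2) y := by
                rw [hh'_eq]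
              have e2 : q y = 2 * kerQ B.P f y := by rw [hq_eq]
              dsimp only
              rw [e1, e2]
              ring
            have hr_iter : (kerQ B.P)^[n] r x
                = 2 * (kerQ B.P)^[n + 1] (fun y => f y ^ 2) x
                  + 2 * (kerQ B.P)^[n] (kerP2 B.P (fun yz : S × S => f yz.1 * f yz.2)) x
                  + (-4 : ℝ) * (kerQ B.P)^[n] (fun y => kerQ B.P f y ^ 2) x := by
              rw [hr_split, kerQ_iter_add (hA1.add' hA2) hA3 n,
                kerQ_iter_add hA1 hA2 n,
                kerQ_iter_const_mul n 2 (kerQ B.P (fun z => f z ^ 2)),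
                kerQ_iter_const_mul n 2 (kerP2 B.P (fun yz : S × S => f yz.1 * f yz.2)),
                kerQ_iter_const_mul n (-4) (fun y => kerQ B.P f y ^ 2),
                ← Function.iterate_succ_apply]
            have hsum : ∑ k ∈ Finset.range (n + 1), (2 : ℝ) ^ (n + 1 + k) *
                  (kerQ B.P)^[n + 1 - k - 1]
                    (kerP2 B.P (fun yz => (kerQ B.P)^[k] f yz.1 *
                      (kerQ B.P)^[k] f yz.2)) x
                = (∑ k ∈ Finset.range n, 4 * ((2 : ℝ) ^ (n + k) *
                    (kerQ B.P)^[n - k - 1]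
                      (kerP2 B.P (fun yz => (kerQ B.P)^[k] (kerQ B.P f) yz.1 *
                        (kerQ B.P)^[k] (kerQ B.P f) yz.2)) x))
                  + 2 ^ (n + 1) * (kerQ B.P)^[n]
                      (kerP2 B.P (fun yz : S × S => f yz.1 * f yz.2)) x := by
              rw [Finset.sum_range_succ']
              congr 1
              · refine Finset.sum_congr rfl fun k hk => ?_
                have e1 : n + 1 - (k + 1) - 1 = n - k - 1 := by omega
                have e2 : n + 1 + (k + 1) = n + k + 2 := by omega
                have e4 : (fun yz : S × S => (kerQ B.P)^[k + 1] f yz.1 *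
                    (kerQ B.P)^[k + 1] f yz.2)
                    = fun yz : S × S => (kerQ B.P)^[k] (kerQ B.P f) yz.1 *
                      (kerQ B.P)^[k] (kerQ B.P f) yz.2 := by
                  funext yz
                  rw [Function.iterate_succ_apply]
                rw [e1, e2, pow_add, e4]
                ring
            rw [hr_iter, hsum, mul_add, Finset.mul_sum]
            ring
end

section
/- Expression of the subcritical cross-covariance through the triangle kernel: for f_k, f_ℓ ∈ ℬ(S³) with Pf_k, Pf_ℓ well defined, and r ≥ 1, k > ℓ ≥ 0, ⟨μ^△, P^△((Q^△)^r f̃_k ⊗ (Q^△)^{k−ℓ+r} f̃_ℓ)⟩ = ⟨μ, P(Q^r(P f̃_k) ⊗ Q^{k−ℓ+r}(P f̃_ℓ))⟩, where f̃ = f − ⟨μ, Pf⟩. -/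
open MeasureTheory ProbabilityTheory Filter

/-- The triangle kernel `P^△` acting on functions on `S³ × S³`:
`(P^△ G)(x,x₀,x₁) = ∫∫ G((x₀,y₀,y₁),(x₁,z₀,z₁)) P(x₀,dy₀dy₁) P(x₁,dz₀dz₁)`. -/
noncomputable def kerPtri {S : Type*} [MeasurableSpace S]
    (P : ProbabilityTheory.Kernel S (S × S)) (G : (S × S × S) × (S × S × S) → ℝ) :
    S × S × S → ℝ :=
  fun p => ∫ yz, (∫ wz, G ((p.2.1, yz.1, yz.2), (p.2.2, wz.1, wz.2)) ∂(P p.2.2)) ∂(P p.2.1)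

/-! Both sides agree pointwise before being integrated against `μ`: `(Q^△)^(n+1) f` is the
average over the two children of `Qⁿ(Pf)`, and `P^△` turns a product of two such child averages
at `(x, x₀, x₁)` into `(Q g)(x₀) (Q h)(x₁)`, because `P` applied to a child average is `Q`. -/

/-- The class `ℬ`. -/
def IsBoundedMeasurable {α : Type*} [MeasurableSpace α] (f : α → ℝ) : Prop :=
  Measurable f ∧ ∃ C, ∀ x, |f x| ≤ C

/-- `(h ⊕ h) / 2` in the paper's notation. -/
noncomputable def childAverage {S : Type*} (h : S → ℝ) : S × S × S → ℝ :=
  fun p => (h p.2.1 + h p.2.2) / 2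

namespace IsBoundedMeasurable

variable {α β : Type*} [MeasurableSpace α] [MeasurableSpace β] {f : α → ℝ}

theorem integrable (hf : IsBoundedMeasurable f) (ν : Measure α) [IsFiniteMeasure ν] :
    Integrable f ν := by
  obtain ⟨hm, C, hC⟩ := hf
  exact .of_bound hm.aestronglyMeasurable C (ae_of_all _ hC)

theorem comp_measurable (hf : IsBoundedMeasurable f) {g : β → α} (hg : Measurable g) :
    IsBoundedMeasurable (f ∘ g) := by
  obtain ⟨hm, C, hC⟩ := hf
  exact ⟨hm.comp hg, C, fun x => hC (g x)⟩

theorem sub_const (hf : IsBoundedMeasurable f) (c : ℝ) :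
    IsBoundedMeasurable fun x => f x - c := by
  obtain ⟨hm, C, hC⟩ := hf
  exact ⟨hm.sub_const c, C + |c|, fun x => (abs_sub _ _).trans (by grw [hC x])⟩

theorem childAverage {S : Type*} [MeasurableSpace S] {h : S → ℝ} (hh : IsBoundedMeasurable h) :
    IsBoundedMeasurable (childAverage h) := by
  obtain ⟨hm, C, hC⟩ := hh
  refine ⟨by unfold _root_.childAverage; fun_prop, C, fun p => ?_⟩
  rw [_root_.childAverage, abs_div, abs_two, div_le_iff₀ two_pos]
  linarith [abs_add_le (h p.2.1) (h p.2.2), hC p.2.1, hC p.2.2]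

end IsBoundedMeasurable

section Kernels

variable {S : Type*} [MeasurableSpace S] (P : Kernel S (S × S)) [IsMarkovKernel P]

theorem IsBoundedMeasurable.kerP3 {f : S × S × S → ℝ} (hf : IsBoundedMeasurable f) :
    IsBoundedMeasurable (kerP3 P f) := by
  obtain ⟨hm, C, hC⟩ := hf
  have hm' : Measurable fun q : S × (S × S) => f (q.1, q.2.1, q.2.2) := hm.comp (by fun_prop)
  refine ⟨hm'.stronglyMeasurable.integral_kernel_prod_right'.measurable, C, fun x => ?_⟩
  simpa [_root_.kerP3] using norm_integral_le_of_norm_le_const (μ := P x)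
    (ae_of_all _ fun yz => (Real.norm_eq_abs _).trans_le (hC _))

theorem kerP3_childAverage {h : S → ℝ} (hh : IsBoundedMeasurable h) :
    kerP3 P (childAverage h) = kerQ P h := by
  funext x
  simp only [kerP3, kerQ, kerP0, kerP1, childAverage]
  rw [integral_div]
  exact congrArg (· / 2) (integral_add ((hh.comp_measurable measurable_fst).integrable _)
    ((hh.comp_measurable measurable_snd).integrable _))

theorem IsBoundedMeasurable.kerQ {h : S → ℝ} (hh : IsBoundedMeasurable h) :
    IsBoundedMeasurable (_root_.kerQ P h) :=
  kerP3_childAverage P hh ▸ hh.childAverage.kerP3 P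

theorem IsBoundedMeasurable.iterate_kerQ {h : S → ℝ} (hh : IsBoundedMeasurable h) (n : ℕ) :
    IsBoundedMeasurable ((_root_.kerQ P)^[n] h) := by
  induction n with
  | zero => exact hh
  | succ n ih => rw [Function.iterate_succ_apply']; exact ih.kerQ P

theorem iterate_kerQtri_succ {f : S × S × S → ℝ} (hf : IsBoundedMeasurable f) (n : ℕ) :
    (kerQtri P)^[n + 1] f = childAverage ((kerQ P)^[n] (kerP3 P f)) := by
  induction n with
  | zero => rfl
  | succ n ih =>
    rw [Function.iterate_succ_apply', ih, Function.iterate_succ_apply',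
      ← kerP3_childAverage P ((hf.kerP3 P).iterate_kerQ P n)]
    rfl

theorem kerPtri_childAverage_mul {g h : S → ℝ} (hg : IsBoundedMeasurable g)
    (hh : IsBoundedMeasurable h) :
    kerPtri P (fun q => childAverage g q.1 * childAverage h q.2) =
      fun p => kerQ P g p.2.1 * kerQ P h p.2.2 := by
  funext p
  simp only [kerPtri, integral_const_mul]
  have hQ {u : S → ℝ} (hu : IsBoundedMeasurable u) (x : S) :
      ∫ yz, childAverage u (x, yz.1, yz.2) ∂(P x) = kerQ P u x :=
    congrFun (kerP3_childAverage P hu) x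
  rw [hQ hh, integral_mul_const, hQ hg]

theorem kerPtri_iterate_kerQtri_mul {f g : S × S × S → ℝ} (hf : IsBoundedMeasurable f)
    (hg : IsBoundedMeasurable g) (m n : ℕ) :
    kerPtri P (fun q => (kerQtri P)^[m + 1] f q.1 * (kerQtri P)^[n + 1] g q.2) =
      fun p => (kerQ P)^[m + 1] (kerP3 P f) p.2.1 * (kerQ P)^[n + 1] (kerP3 P g) p.2.2 := by
  simp only [iterate_kerQtri_succ P hf, iterate_kerQtri_succ P hg, Function.iterate_succ_apply']
  exact kerPtri_childAverage_mul P ((hf.kerP3 P).iterate_kerQ P m) ((hg.kerP3 P).iterate_kerQ P n)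

end Kernels

theorem cross_covariance_triangle_general {S : Type*} [MeasurableSpace S]
    (P : Kernel S (S × S)) [IsMarkovKernel P]
    (μ : Measure S)
    (fk fl : S × S × S → ℝ)
    (hfkm : Measurable fk) (hfkb : ∃ C, ∀ p, |fk p| ≤ C)
    (hflm : Measurable fl) (hflb : ∃ C, ∀ p, |fl p| ≤ C)
    (r k ℓ : ℕ) (hr : 1 ≤ r) :
    muTri μ P (kerPtri P (fun q =>
        ((kerQtri P)^[r] (fun p => fk p - ∫ x, kerP3 P fk x ∂μ)) q.1 *
        ((kerQtri P)^[k - ℓ + r] (fun p => fl p - ∫ x, kerP3 P fl x ∂μ)) q.2))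
      = ∫ x, kerP2 P (fun yz =>
            (kerQ P)^[r] (kerP3 P (fun p => fk p - ∫ y, kerP3 P fk y ∂μ)) yz.1 *
            (kerQ P)^[k - ℓ + r] (kerP3 P (fun p => fl p - ∫ y, kerP3 P fl y ∂μ)) yz.2)
          x ∂μ := by
  obtain ⟨m, rfl⟩ := Nat.exists_eq_add_of_le' hr
  have hfk : IsBoundedMeasurable fun p => fk p - ∫ x, kerP3 P fk x ∂μ :=
    IsBoundedMeasurable.sub_const ⟨hfkm, hfkb⟩ _
  have hfl : IsBoundedMeasurable fun p => fl p - ∫ x, kerP3 P fl x ∂μ :=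
    IsBoundedMeasurable.sub_const ⟨hflm, hflb⟩ _
  rw [← add_assoc, muTri, kerPtri_iterate_kerQtri_mul P hfk hfl]
  rfl

/-- Expression of the subcritical cross-covariance through the triangle kernel: for
`r ≥ 1`, `k > ℓ ≥ 0`,
`⟨μ^△, P^△((Q^△)^r f̃_k ⊗ (Q^△)^{k−ℓ+r} f̃_ℓ)⟩ = ⟨μ, P(Q^r(P f̃_k) ⊗ Q^{k−ℓ+r}(P f̃_ℓ))⟩`,
where `f̃ = f − ⟨μ, Pf⟩` and `μ` is invariant for `Q`. -/
theorem cross_covariance_triangle {S : Type*} [MeasurableSpace S]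
    (P : Kernel S (S × S)) [IsMarkovKernel P]
    (μ : Measure S) [IsProbabilityMeasure μ]
    (hinv : ∀ h : S → ℝ, Measurable h → (∃ C, ∀ y, |h y| ≤ C) →
      ∫ x, kerQ P h x ∂μ = ∫ x, h x ∂μ)
    (fk fl : S × S × S → ℝ)
    (hfkm : Measurable fk) (hfkb : ∃ C, ∀ p, |fk p| ≤ C)
    (hflm : Measurable fl) (hflb : ∃ C, ∀ p, |fl p| ≤ C)
    (r k ℓ : ℕ) (hr : 1 ≤ r) (hkl : ℓ < k) :
    muTri μ P (kerPtri P (fun q =>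
        ((kerQtri P)^[r] (fun p => fk p - ∫ x, kerP3 P fk x ∂μ)) q.1 *
        ((kerQtri P)^[k - ℓ + r] (fun p => fl p - ∫ x, kerP3 P fl x ∂μ)) q.2))
      = ∫ x, kerP2 P (fun yz =>
            (kerQ P)^[r] (kerP3 P (fun p => fk p - ∫ y, kerP3 P fk y ∂μ)) yz.1 *
            (kerQ P)^[k - ℓ + r] (kerP3 P (fun p => fl p - ∫ y, kerP3 P fl y ∂μ)) yz.2)
          x ∂μ :=
  cross_covariance_triangle_general P μ fk fl hfkm hfkb hflm hflb r k ℓ hr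
end
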